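/- Let a < 0 and let μ be a Borel probability measure on ℝ with support contained in [a,∞) such that E_μ[e^X] = 1. Then for every λ > a, μ({x : x ≥ λ}) ≤ min{1, (1 − e^a)/(e^λ − e^a)}. Moreover this bound is sharp: sup over all such measures μ of μ({x : x ≥ λ}) equals min{1, (1 − e^a)/(e^λ − e^a)}. -/

import Mathlib

open MeasureTheory Set Filter Topology
open scoped BigOperators ENNReal

noncomputable section

/-! On `[a, ∞)` we have `exp x ≥ exp a + (exp λ - exp a) 𝟙[λ, ∞)(x)`, since `exp` is increasing;
integrating against `μ` and using `E[exp X] = 1` gives the tail bound. It is attained by the law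
that puts mass `p = (1 - exp a) / (exp b - exp a)` at `b = max λ 0` and `1 - p` at `a`: this
choice of `p` makes `E[exp X] = 1`, and `p` equals the bound (it is `1` when `λ ≤ 0`). -/

/-- The support of a measure: points all of whose open neighborhoods have
positive measure. -/
def msupport {E : Type*} [TopologicalSpace E] [MeasurableSpace E]
    (μ : Measure E) : Set E :=
  {x | ∀ U : Set E, IsOpen U → x ∈ U → μ U ≠ 0}

section Support

variable {E : Type*} [TopologicalSpace E] [MeasurableSpace E]

theorem msupport_eq_support (μ : Measure E) : msupport μ = μ.support := by
  ext x
  simp only [msupport, Measure.support_eq_forall_isOpen, pos_iff_ne_zero]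
  exact forall_congr' fun U => forall_comm

theorem msupport_subset_iff_ae_mem [HereditarilyLindelofSpace E] {μ : Measure E} {s : Set E}
    (hs : IsClosed s) : msupport μ ⊆ s ↔ ∀ᵐ x ∂μ, x ∈ s := by
  rw [msupport_eq_support]
  exact ⟨fun h => mem_of_superset μ.support_mem_ae h, μ.support_subset_of_isClosed hs⟩

end Support

theorem add_mul_measureReal_Ici_le_integral {μ : Measure ℝ} [IsProbabilityMeasure μ]
    {f : ℝ → ℝ} (hf : Monotone f) (hfi : Integrable f μ) {a : ℝ} (ha : ∀ᵐ x ∂μ, a ≤ x)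
    (lam : ℝ) : f a + (f lam - f a) * μ.real (Ici lam) ≤ ∫ x, f x ∂μ := by
  have hstep : Integrable (fun x => f a + (f lam - f a) * (Ici lam).indicator 1 x) μ :=
    (integrable_const _).add (((integrable_const 1).indicator measurableSet_Ici).const_mul _)
  calc f a + (f lam - f a) * μ.real (Ici lam)
      = ∫ x, f a + (f lam - f a) * (Ici lam).indicator 1 x ∂μ := by
        rw [integral_add (integrable_const _)
          (((integrable_const 1).indicator measurableSet_Ici).const_mul _), integral_const,
          integral_const_mul, integral_indicator_one measurableSet_Ici]
        simp
    _ ≤ ∫ x, f x ∂μ := by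
        refine integral_mono_ae hstep hfi ?_
        filter_upwards [ha] with x hax
        by_cases hx : lam ≤ x
        · simpa [indicator_of_mem (mem_Ici.2 hx)] using hf hx
        · simpa [indicator_of_notMem (notMem_Ici.2 (not_le.1 hx))] using hf hax

theorem measureReal_Ici_le_of_integral_exp_eq_one {μ : Measure ℝ} [IsProbabilityMeasure μ]
    {a lam : ℝ} (hlam : a < lam) (ha : ∀ᵐ x ∂μ, a ≤ x) (hint : Integrable Real.exp μ)
    (hexp : ∫ x, Real.exp x ∂μ = 1) :
    μ.real (Ici lam) ≤ min 1 ((1 - Real.exp a) / (Real.exp lam - Real.exp a)) := by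
  have hstep := add_mul_measureReal_Ici_le_integral Real.exp_monotone hint ha lam
  rw [hexp] at hstep
  refine le_min measureReal_le_one ?_
  rw [le_div_iff₀ (sub_pos.2 (Real.exp_lt_exp.2 hlam))]
  linarith

section TwoPoint

variable {α : Type*} [MeasurableSpace α]

def twoPointMeasure (p : ℝ) (x y : α) : Measure α :=
  ENNReal.ofReal p • Measure.dirac x + ENNReal.ofReal (1 - p) • Measure.dirac y

variable {p : ℝ} {x y : α}

theorem isProbabilityMeasure_twoPointMeasure (hp0 : 0 ≤ p) (hp1 : p ≤ 1) :
    IsProbabilityMeasure (twoPointMeasure p x y) := by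
  constructor
  simp [twoPointMeasure, ← ENNReal.ofReal_add hp0 (sub_nonneg.2 hp1)]

variable [MeasurableSingletonClass α]

theorem measureReal_twoPointMeasure_of_mem_of_notMem (hp0 : 0 ≤ p) {s : Set α} (hx : x ∈ s)
    (hy : y ∉ s) : (twoPointMeasure p x y).real s = p := by
  simp [twoPointMeasure, measureReal_def, Measure.dirac_apply, hx, hy, hp0]

theorem integrable_twoPointMeasure (f : α → ℝ) : Integrable f (twoPointMeasure p x y) :=
  ((integrable_dirac (by simp)).smul_measure ENNReal.ofReal_ne_top).add_measure
    ((integrable_dirac (by simp)).smul_measure ENNReal.ofReal_ne_top)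

theorem integral_twoPointMeasure (hp0 : 0 ≤ p) (hp1 : p ≤ 1) (f : α → ℝ) :
    ∫ z, f z ∂twoPointMeasure p x y = p * f x + (1 - p) * f y := by
  rw [twoPointMeasure, integral_add_measure, integral_smul_measure, integral_smul_measure,
    integral_dirac, integral_dirac, ENNReal.toReal_ofReal hp0,
    ENNReal.toReal_ofReal (sub_nonneg.2 hp1), smul_eq_mul, smul_eq_mul]
  all_goals exact (integrable_dirac (by simp)).smul_measure ENNReal.ofReal_ne_top

theorem ae_twoPointMeasure {P : α → Prop} (hx : P x) (hy : P y) :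
    ∀ᵐ z ∂twoPointMeasure p x y, P z := by
  rw [twoPointMeasure, ae_add_measure_iff]
  exact ⟨Measure.ae_smul_measure (by rwa [ae_dirac_eq]) _,
    Measure.ae_smul_measure (by rwa [ae_dirac_eq]) _⟩

end TwoPoint

theorem Real.biSup_eq_of_forall_le_of_exists_le {ι : Type*} {S : Set ι} {f : ι → ℝ} {M : ℝ}
    (hM : 0 ≤ M) (hle : ∀ i ∈ S, f i ≤ M) (hex : ∃ i ∈ S, M ≤ f i) : ⨆ i ∈ S, f i = M := by
  -- `⨆ i ∈ S` is `⨆ i, ⨆ (_ : i ∈ S)`, and an empty supremum in `ℝ` is `0`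
  have hbound : ∀ i, ⨆ (_ : i ∈ S), f i ≤ M := fun i => Real.iSup_le (hle i) hM
  obtain ⟨i, hi, hMi⟩ := hex
  refine le_antisymm (Real.iSup_le hbound hM) (hMi.trans ?_)
  calc f i = ⨆ (_ : i ∈ S), f i := (ciSup_pos (f := fun _ => f i) hi).symm
    _ ≤ ⨆ j ∈ S, f j := le_ciSup ⟨M, forall_mem_range.2 hbound⟩ i

theorem exists_integral_exp_eq_one_and_min_le_measureReal_Ici {a lam : ℝ} (ha : a < 0)
    (hlam : a < lam) :
    ∃ μ : Measure ℝ, (IsProbabilityMeasure μ ∧ msupport μ ⊆ Ici a ∧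
      Integrable Real.exp μ ∧ ∫ x, Real.exp x ∂μ = 1) ∧
      min 1 ((1 - Real.exp a) / (Real.exp lam - Real.exp a)) ≤ μ.real (Ici lam) := by
  have hea : Real.exp a < 1 := Real.exp_lt_one_iff.2 ha
  have hmin : min 1 ((1 - Real.exp a) / (Real.exp lam - Real.exp a)) ≤
      (1 - Real.exp a) / (Real.exp (max lam 0) - Real.exp a) := by
    rcases le_total lam 0 with hl | hl
    · rw [max_eq_right hl, Real.exp_zero, div_self (by linarith)]
      exact min_le_left _ _
    · rw [max_eq_left hl]
      exact min_le_right _ _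
  have hlamb : lam ≤ max lam 0 := le_max_left _ _
  have hb0 : 0 ≤ max lam 0 := le_max_right _ _
  generalize max lam 0 = b at hmin hlamb hb0
  set p := (1 - Real.exp a) / (Real.exp b - Real.exp a)
  have hab : Real.exp a < Real.exp b := Real.exp_lt_exp.2 (hlam.trans_le hlamb)
  have heb : 1 ≤ Real.exp b := Real.one_le_exp hb0
  have hp0 : 0 ≤ p := div_nonneg (by linarith) (by linarith)
  have hp1 : p ≤ 1 := (div_le_one (by linarith)).2 (by linarith)
  refine ⟨twoPointMeasure p b a,
    ⟨isProbabilityMeasure_twoPointMeasure hp0 hp1, ?_, integrable_twoPointMeasure _, ?_⟩, ?_⟩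
  · exact (msupport_subset_iff_ae_mem isClosed_Ici).2
      (ae_twoPointMeasure (P := fun z => a ≤ z) (hlam.le.trans hlamb) le_rfl)
  · have hpb : p * (Real.exp b - Real.exp a) = 1 - Real.exp a :=
      div_mul_cancel₀ _ (sub_pos.2 hab).ne'
    rw [integral_twoPointMeasure hp0 hp1]
    linear_combination hpb
  · rwa [measureReal_twoPointMeasure_of_mem_of_notMem hp0 (mem_Ici.2 hlamb)
      (notMem_Ici.2 hlam)]

/-- sharp tail bound for a variable bounded below by `a < 0`
satisfying `E[e^X] = 1`. -/
theorem sharp_tail_bound_jarzynski (a : ℝ) (ha : a < 0) (lam : ℝ)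
    (hlam : a < lam) :
    (∀ μ : Measure ℝ, IsProbabilityMeasure μ → msupport μ ⊆ Ici a →
      Integrable (fun x => Real.exp x) μ → (∫ x, Real.exp x ∂μ) = 1 →
      (μ (Ici lam)).toReal ≤
        min 1 ((1 - Real.exp a) / (Real.exp lam - Real.exp a))) ∧
    (⨆ μ ∈ {μ : Measure ℝ | IsProbabilityMeasure μ ∧ msupport μ ⊆ Ici a ∧
        Integrable (fun x => Real.exp x) μ ∧ (∫ x, Real.exp x ∂μ) = 1},
      (μ (Ici lam)).toReal) =
      min 1 ((1 - Real.exp a) / (Real.exp lam - Real.exp a)) := by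
  have tail_bound : ∀ μ : Measure ℝ, IsProbabilityMeasure μ → msupport μ ⊆ Ici a →
      Integrable (fun x => Real.exp x) μ → (∫ x, Real.exp x ∂μ) = 1 →
      (μ (Ici lam)).toReal ≤ min 1 ((1 - Real.exp a) / (Real.exp lam - Real.exp a)) :=
    fun μ _ hsupp hint hexp => measureReal_Ici_le_of_integral_exp_eq_one hlam
      ((msupport_subset_iff_ae_mem isClosed_Ici).1 hsupp) hint hexp
  have hM : 0 ≤ min 1 ((1 - Real.exp a) / (Real.exp lam - Real.exp a)) :=
    le_min zero_le_one (div_nonneg (sub_nonneg.2 (Real.exp_le_one_iff.2 ha.le))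
      (sub_nonneg.2 (Real.exp_le_exp.2 hlam.le)))
  exact ⟨tail_bound, Real.biSup_eq_of_forall_le_of_exists_le hM
    (fun μ ⟨hprob, hsupp, hint, hexp⟩ => tail_bound μ hprob hsupp hint hexp)
    (exists_integral_exp_eq_one_and_min_le_measureReal_Ici ha hlam)⟩

end
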